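/- Let α∈(0,2) and κ∈ℝ with ακ > −1 and κ < 1 − 1/α, and let t∈ℝ, t≠0. Then ∫₀^∞ u^{κα} · |ln|t+u| − ln u|^α du < ∞. -/

import Mathlib

/-!
For large `u`, `log (t + u) - log u = log (1 + t / u)` is at most `2 |t| / u`, so the integrand is
`O(u ^ (κα - α))` with `κα - α < -1`. On a bounded range `(0, R]` we split
`|log (t + u) - log u| ^ α ≤ 2 ^ α (|log (t + u)| ^ α + |log u| ^ α)`; since
`|log x| ^ α ≤ C (x ^ δ + x ^ (-δ))` for every `δ > 0`, the logarithmic singularities at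
`u = 0` and `u = -t` are integrable against `u ^ (κα)` (as `κα > -1`), and `t ≠ 0` keeps them
apart.
-/

open MeasureTheory Real Set intervalIntegral

lemma Real.add_rpow_le_two_rpow_mul_rpow_add_rpow {a b p : ℝ} (ha : 0 ≤ a) (hb : 0 ≤ b)
    (hp : 0 ≤ p) : (a + b) ^ p ≤ 2 ^ p * (a ^ p + b ^ p) := calc
  (a + b) ^ p ≤ (2 * max a b) ^ p := by rw [two_mul]; gcongr <;> simp
  _ = 2 ^ p * max a b ^ p := mul_rpow zero_le_two (ha.trans (le_max_left a b))
  _ ≤ 2 ^ p * (a ^ p + b ^ p) := by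
    gcongr
    rcases le_total a b with h | h
    · rw [max_eq_right h]; exact le_add_of_nonneg_left (rpow_nonneg ha p)
    · rw [max_eq_left h]; exact le_add_of_nonneg_right (rpow_nonneg hb p)

lemma Real.abs_log_rpow_le {p δ x : ℝ} (hp : 0 < p) (hδ : 0 < δ) (hx : 0 ≤ x) :
    |log x| ^ p ≤ (p / δ) ^ p * (x ^ δ + x ^ (-δ)) := by
  have hε : 0 < δ / p := div_pos hδ hp
  have of_abs_log_le : ∀ y, 0 ≤ y → |log x| ≤ y ^ (δ / p) / (δ / p) →
      |log x| ^ p ≤ (p / δ) ^ p * y ^ δ := by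
    intro y hy h
    calc |log x| ^ p ≤ (y ^ (δ / p) / (δ / p)) ^ p := by gcongr
      _ = (p / δ) ^ p * y ^ δ := by
        rw [div_rpow (rpow_nonneg hy _) hε.le, ← rpow_mul hy, div_mul_cancel₀ δ hp.ne',
          div_eq_mul_inv, ← inv_rpow hε.le, inv_div]
        ring
  have hxδ : 0 ≤ x ^ δ := rpow_nonneg hx δ
  have hxδ' : 0 ≤ x ^ (-δ) := rpow_nonneg hx (-δ)
  have hc : 0 ≤ (p / δ) ^ p := rpow_nonneg (div_nonneg hp.le hδ.le) p
  rcases le_total 1 x with h1 | h1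
  · have := of_abs_log_le x hx <| by
      rw [abs_of_nonneg (log_nonneg h1)]; exact log_le_rpow_div hx hε
    nlinarith
  · have := of_abs_log_le x⁻¹ (inv_nonneg.2 hx) <| by
      rw [abs_of_nonpos (log_nonpos hx h1), ← log_inv]
      exact log_le_rpow_div (inv_nonneg.2 hx) hε
    rw [inv_rpow hx, ← rpow_neg hx] at this
    nlinarith

lemma integrableOn_rpow_mul_abs_log_rpow {a p : ℝ} (ha : -1 < a) (hp : 0 < p) (R : ℝ) :
    IntegrableOn (fun u => u ^ a * |log u| ^ p) (Ioc 0 R) := by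
  set δ := (a + 1) / 2 with hδ_def
  have hδ : 0 < δ := by linarith
  have haδ : -1 < a - δ := by linarith
  have hbound : IntegrableOn (fun u => (p / δ) ^ p * (u ^ (a + δ) + u ^ (a - δ))) (Ioc 0 R) :=
    ((intervalIntegrable_rpow' (by linarith) (a := 0) (b := R)).1.add
      (intervalIntegrable_rpow' haδ (a := 0) (b := R)).1).const_mul _
  refine hbound.mono' (by fun_prop) (ae_restrict_of_forall_mem measurableSet_Ioc fun u hu => ?_)
  have hu : 0 < u := hu.1
  rw [norm_of_nonneg (by positivity)]
  calc u ^ a * |log u| ^ p ≤ u ^ a * ((p / δ) ^ p * (u ^ δ + u ^ (-δ))) := by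
        gcongr; exact abs_log_rpow_le hp hδ hu.le
    _ = (p / δ) ^ p * (u ^ (a + δ) + u ^ (a - δ)) := by
        rw [rpow_add hu, sub_eq_add_neg, rpow_add hu]; ring

lemma intervalIntegrable_abs_log_rpow {p : ℝ} (hp : 0 < p) (a b : ℝ) :
    IntervalIntegrable (fun x => |log x| ^ p) volume a b := by
  refine intervalIntegrable_of_even (fun x => by rw [log_neg_eq_log]) fun x hx => ?_
  rw [intervalIntegrable_iff_integrableOn_Ioc_of_le hx.le]
  simpa using integrableOn_rpow_mul_abs_log_rpow neg_one_lt_zero hp x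

lemma integrableOn_rpow_mul_abs_log_add_rpow {a p t : ℝ} (ha : -1 < a) (hp : 0 < p) (ht : t ≠ 0)
    (R : ℝ) : IntegrableOn (fun u => u ^ a * |log (t + u)| ^ p) (Ioc 0 R) := by
  set r := |t| / 2
  have hr : 0 < r := by positivity
  have near : IntegrableOn (fun u => u ^ a * |log (t + u)| ^ p) (Icc 0 r) := by
    refine ((intervalIntegrable_iff_integrableOn_Icc_of_le hr.le).1
      (intervalIntegrable_rpow' ha)).mul_continuousOn ?_ isCompact_Icc
    refine ((continuousOn_const.add continuousOn_id).log fun u hu => ?_).abs.rpow_const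
      fun _ _ => Or.inr hp.le
    show t + u ≠ 0
    have : |t| - u ≤ |t + u| := by simpa [abs_of_nonneg hu.1] using abs_sub_abs_le_abs_add t u
    have : u ≤ |t| / 2 := hu.2
    exact abs_pos.1 (by linarith [abs_pos.2 ht])
  rcases le_total R r with hR | hR
  · exact near.mono_set (Ioc_subset_Icc_self.trans (Icc_subset_Icc_right hR))
  have far : IntegrableOn (fun u => u ^ a * |log (t + u)| ^ p) (Icc r R) := by
    refine IntegrableOn.continuousOn_mul ?_ ?_ isCompact_Icc
    · exact continuousOn_id.rpow_const fun u hu => Or.inl (hr.trans_le hu.1).ne'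
    · have := IntervalIntegrable.comp_add_left (f := fun x => |log x| ^ p)
        (intervalIntegrable_abs_log_rpow hp (t + r) (t + R)) t
      rw [add_sub_cancel_left, add_sub_cancel_left,
        intervalIntegrable_iff_integrableOn_Icc_of_le hR] at this
      exact this
  exact (near.union far).mono_set (by rw [Icc_union_Icc_eq_Icc hr.le hR]; exact Ioc_subset_Icc_self)

lemma abs_log_add_sub_log_le {t u : ℝ} (hu : 0 < u) (htu : 2 * |t| ≤ u) :
    |log (t + u) - log u| ≤ 2 * |t| / u := by
  have hx : |t / u| ≤ 1 / 2 := by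
    rw [abs_div, abs_of_pos hu, div_le_iff₀ hu]; linarith
  have hlog : log (t + u) - log u = log (1 - -(t / u)) := by
    have htu : 0 < t + u := by linarith [neg_abs_le t]
    rw [← log_div htu.ne' hu.ne', sub_neg_eq_add, add_div, div_self hu.ne', add_comm]
  have key := abs_log_sub_add_sum_range_le (x := -(t / u)) (by rw [abs_neg]; linarith) 0
  simp only [Finset.range_zero, Finset.sum_empty, zero_add, pow_one, abs_neg] at key
  calc |log (t + u) - log u| ≤ |t / u| / (1 - |t / u|) := hlog ▸ key
    _ ≤ |t / u| / (1 / 2) := by gcongr; linarith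
    _ = 2 * |t| / u := by rw [abs_div, abs_of_pos hu]; ring

lemma integrableOn_Ioi_rpow_mul_abs_log_add_sub_log_rpow {a p t R : ℝ} (ha : a - p < -1)
    (hp : 0 ≤ p) (hR : 0 < R) (htR : 2 * |t| ≤ R) :
    IntegrableOn (fun u => u ^ a * |log (t + u) - log u| ^ p) (Ioi R) := by
  refine ((integrableOn_Ioi_rpow_of_lt ha hR).const_mul ((2 * |t|) ^ p)).mono' (by fun_prop)
    (ae_restrict_of_forall_mem measurableSet_Ioi fun u huR => ?_)
  have hu : 0 < u := hR.trans huR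
  rw [norm_of_nonneg (by positivity)]
  calc u ^ a * |log (t + u) - log u| ^ p ≤ u ^ a * (2 * |t| / u) ^ p := by
        gcongr; exact abs_log_add_sub_log_le hu (htR.trans huR.le)
    _ = (2 * |t|) ^ p * u ^ (a - p) := by
        rw [div_rpow (by positivity) hu.le, rpow_sub hu]; ring

lemma integrableOn_Ioc_rpow_mul_abs_log_add_sub_log_rpow {a p t : ℝ} (ha : -1 < a) (hp : 0 < p)
    (ht : t ≠ 0) (R : ℝ) :
    IntegrableOn (fun u => u ^ a * |log (t + u) - log u| ^ p) (Ioc 0 R) := by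
  refine (((integrableOn_rpow_mul_abs_log_add_rpow ha hp ht R).add
    (integrableOn_rpow_mul_abs_log_rpow ha hp R)).const_mul (2 ^ p)).mono' (by fun_prop)
    (ae_restrict_of_forall_mem measurableSet_Ioc fun u hu => ?_)
  have hu : 0 < u := hu.1
  rw [norm_of_nonneg (by positivity)]
  calc u ^ a * |log (t + u) - log u| ^ p ≤ u ^ a * (|log (t + u)| + |log u|) ^ p := by
        gcongr; exact abs_sub _ _
    _ ≤ u ^ a * (2 ^ p * (|log (t + u)| ^ p + |log u| ^ p)) := by
        gcongr; exact add_rpow_le_two_rpow_mul_rpow_add_rpow (abs_nonneg _) (abs_nonneg _) hp.le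
    _ = 2 ^ p * (u ^ a * |log (t + u)| ^ p + u ^ a * |log u| ^ p) := by ring

theorem stmt19_general (α κ t : ℝ) (hα0 : 0 < α)
    (h1 : -1 < α * κ) (h2 : κ < 1 - 1 / α) (ht : t ≠ 0) :
    ∫⁻ u in Set.Ioi (0:ℝ),
      ENNReal.ofReal (u ^ (κ * α) * |Real.log |t + u| - Real.log u| ^ α) < ⊤ := by
  have hR : 0 < 2 * |t| := by positivity
  have hκα : -1 < κ * α := by linarith [mul_comm α κ]
  have hκαα : κ * α - α < -1 := by
    have := mul_lt_mul_of_pos_right h2 hα0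
    rw [sub_mul, one_div_mul_cancel hα0.ne', one_mul] at this
    linarith
  simp only [log_abs]
  rw [← Ioc_union_Ioi_eq_Ioi hR.le]
  exact ((integrableOn_Ioc_rpow_mul_abs_log_add_sub_log_rpow hκα hα0 ht _).union
    (integrableOn_Ioi_rpow_mul_abs_log_add_sub_log_rpow hκαα hα0.le hR le_rfl)).lintegral_lt_top

theorem stmt19 (α κ t : ℝ) (hα0 : 0 < α) (hα2 : α < 2)
    (h1 : -1 < α * κ) (h2 : κ < 1 - 1 / α) (ht : t ≠ 0) :
    ∫⁻ u in Set.Ioi (0:ℝ),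
      ENNReal.ofReal (u ^ (κ * α) * |Real.log |t + u| - Real.log u| ^ α) < ⊤ :=
  stmt19_general α κ t hα0 h1 h2 ht
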